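/- For each real 0 < α < 1 and each integer d ≥ 2, the complement [0,1) \ 𝒟_{α,d} is a set of the first Baire category (meagre) in [0,1). -/

import Mathlib

open Filter
open scoped Classical

/-- The discrepancy at length `N` of a sequence `u : ℕ → ℝ`:
`D_N = sup_{0 ≤ a < b ≤ 1} |#{1 ≤ n ≤ N : u n ∈ (a,b)} - (b-a)N|`. -/
noncomputable def discrepancy (u : ℕ → ℝ) (N : ℕ) : ℝ :=
  sSup {D : ℝ | ∃ a b : ℝ, 0 ≤ a ∧ a < b ∧ b ≤ 1 ∧
    D = |(((Finset.Icc 1 N).filter fun n => u n ∈ Set.Ioo a b).card : ℝ) -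
      (b - a) * N|}

/-- `Δ_d(x; N)`: the discrepancy of the sequence of fractional parts of `x n^d`. -/
noncomputable def monDiscrepancy (d : ℕ) (x : ℝ) (N : ℕ) : ℝ :=
  discrepancy (fun n => Int.fract (x * (n : ℝ) ^ d)) N

/-- `𝒟_{α,d}`: points of `[0,1)` with `Δ_d(x;N) ≥ N^α` for infinitely many `N`. -/
def monDiscSet (d : ℕ) (α : ℝ) : Set ℝ :=
  {x | x ∈ Set.Ico (0 : ℝ) 1 ∧
    ∃ᶠ N : ℕ in atTop, (N : ℝ) ^ α ≤ monDiscrepancy d x N}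

lemma disc_bddAbove (u : ℕ → ℝ) (N : ℕ) :
    BddAbove {D : ℝ | ∃ a b : ℝ, 0 ≤ a ∧ a < b ∧ b ≤ 1 ∧
    D = |(((Finset.Icc 1 N).filter fun n => u n ∈ Set.Ioo a b).card : ℝ) -
      (b - a) * N|} := by
  refine ⟨2 * N, ?_⟩
  rintro D ⟨a, b, ha, hab, hb, rfl⟩
  have hcard : (((Finset.Icc 1 N).filter fun n => u n ∈ Set.Ioo a b).card : ℝ) ≤ N := by
    have h1 := Finset.card_filter_le (Finset.Icc 1 N) (fun n => u n ∈ Set.Ioo a b)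
    have h2 : (Finset.Icc 1 N).card = N := by simp
    rw [h2] at h1
    exact_mod_cast h1
  have hcard0 : (0:ℝ) ≤ (((Finset.Icc 1 N).filter fun n => u n ∈ Set.Ioo a b).card : ℝ) := by
    positivity
  have hbaN : (b - a) * N ≤ N := by nlinarith [Nat.cast_nonneg (α := ℝ) N]
  have hbaN0 : (0:ℝ) ≤ (b - a) * N := by
    have : (0:ℝ) ≤ (N:ℝ) := Nat.cast_nonneg N
    nlinarith
  rw [abs_le]
  constructor <;> linarith

lemma disc_lower (u : ℕ → ℝ) (N : ℕ) (a b : ℝ) (ha : 0 ≤ a) (hab : a < b) (hb : b ≤ 1)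
    (h : ∀ n ∈ Finset.Icc 1 N, u n ∉ Set.Ioo a b) :
    (b - a) * N ≤ discrepancy u N := by
  apply le_csSup (disc_bddAbove u N)
  refine ⟨a, b, ha, hab, hb, ?_⟩
  rw [Finset.filter_false_of_mem h]
  have hpos : (0:ℝ) ≤ (b - a) * N := by
    have : (0:ℝ) ≤ (N:ℝ) := Nat.cast_nonneg N
    nlinarith
  rw [Finset.card_empty]
  rw [Nat.cast_zero, zero_sub, abs_neg, abs_of_nonneg hpos]

lemma fract_avoid (q : ℕ) (hq : 0 < q) (t s : ℝ) (m : ℤ) (hm : (q:ℝ) * t = m)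
    (h : |s - t| * q < 1/3) :
    Int.fract s ∉ Set.Ioo (1/(3*(q:ℝ))) (2/(3*(q:ℝ))) := by
  rintro ⟨h1, h2⟩
  have hq' : (0:ℝ) < q := by exact_mod_cast hq
  set k : ℤ := (q:ℤ) * ⌊s⌋ - m with hkdef
  have hk : (k:ℝ) = (q:ℝ)*(s-t) - (q:ℝ)*Int.fract s := by
    simp only [hkdef, Int.fract]
    push_cast
    rw [← hm]
    ring
  have habs : |(q:ℝ)*(s-t)| < 1/3 := by
    rw [abs_mul, abs_of_nonneg hq'.le, mul_comm]
    exact h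
  obtain ⟨hl, hr⟩ := abs_lt.mp habs
  have e1 : (q:ℝ) * (1/(3*(q:ℝ))) = 1/3 := by field_simp
  have e2 : (q:ℝ) * (2/(3*(q:ℝ))) = 2/3 := by field_simp
  have hf1 : (1:ℝ)/3 < (q:ℝ) * Int.fract s := by
    rw [← e1]; exact mul_lt_mul_of_pos_left h1 hq'
  have hf2 : (q:ℝ) * Int.fract s < 2/3 := by
    rw [← e2]; exact mul_lt_mul_of_pos_left h2 hq'
  have c1 : (k:ℝ) < 0 := by rw [hk]; linarith
  have c2 : (-1:ℝ) < (k:ℝ) := by rw [hk]; linarith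
  have d1 : k < 0 := by exact_mod_cast c1
  have d2 : -1 < k := by exact_mod_cast c2
  omega

lemma aux_nwd (d : ℕ) (α : ℝ) (hα1 : α < 1) (M : ℕ) :
    IsNowhereDense {x : ℝ | ∀ N, M ≤ N → monDiscrepancy d x N < (N:ℝ)^α} := by
  set S := {x : ℝ | ∀ N, M ≤ N → monDiscrepancy d x N < (N:ℝ)^α} with hS
  rw [IsNowhereDense, Set.eq_empty_iff_forall_notMem]
  intro z hz
  obtain ⟨ε, hε, hball⟩ := Metric.isOpen_iff.mp isOpen_interior z hz
  obtain ⟨r, hr1, hr2⟩ := exists_rat_btwn (show z - ε < z by linarith)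
  have hrcl : (r:ℝ) ∈ closure S := by
    apply interior_subset
    apply hball
    rw [Metric.mem_ball, Real.dist_eq, abs_lt]
    constructor <;> linarith
  set q : ℕ := r.den with hqdef
  have hq : 0 < q := r.pos
  have hq' : (0:ℝ) < q := by exact_mod_cast hq
  -- choose N
  have hNev : ∀ᶠ N : ℕ in atTop, (3*(q:ℝ)) ≤ (N:ℝ)^(1-α) :=
    ((tendsto_rpow_atTop (by linarith : (0:ℝ) < 1 - α)).comp
      tendsto_natCast_atTop_atTop).eventually_ge_atTop _
  obtain ⟨N, hNM, hN1, hNq⟩ :=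
    ((eventually_ge_atTop M).and ((eventually_ge_atTop 1).and hNev)).exists
  have hN0 : (0:ℝ) < N := by exact_mod_cast hN1
  have key : (N:ℝ)^α * (3*(q:ℝ)) ≤ N := by
    calc (N:ℝ)^α * (3*(q:ℝ)) ≤ (N:ℝ)^α * (N:ℝ)^(1-α) :=
          mul_le_mul_of_nonneg_left hNq (Real.rpow_nonneg hN0.le α)
      _ = N := by
          rw [← Real.rpow_add hN0]
          norm_num
  set δ : ℝ := 1/(6*(q:ℝ)*(N:ℝ)^d) with hδdef
  have hδ : 0 < δ := by positivity
  obtain ⟨y, hyS, hyd⟩ := Metric.mem_closure_iff.mp hrcl δ hδ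
  -- discrepancy lower bound at y
  have havoid : ∀ n ∈ Finset.Icc 1 N,
      Int.fract (y*(n:ℝ)^d) ∉ Set.Ioo (1/(3*(q:ℝ))) (2/(3*(q:ℝ))) := by
    intro n hn
    obtain ⟨hn1, hnN⟩ := Finset.mem_Icc.mp hn
    have hden : ((r.den:ℝ)) ≠ 0 := by exact_mod_cast r.den_nz
    have hm : (q:ℝ) * ((r:ℝ)*(n:ℝ)^d) = ((r.num * (n:ℕ)^d : ℤ) : ℝ) := by
      rw [Rat.cast_def]
      push_cast
      field_simp
      try ring
    apply fract_avoid q hq ((r:ℝ)*(n:ℝ)^d) (y*(n:ℝ)^d) (r.num * (n:ℕ)^d) hm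
    have h1 : |y*(n:ℝ)^d - (r:ℝ)*(n:ℝ)^d| = |y - (r:ℝ)| * (n:ℝ)^d := by
      rw [← sub_mul, abs_mul, abs_of_nonneg (by positivity : (0:ℝ) ≤ (n:ℝ)^d)]
    rw [h1]
    have hyr : |y - (r:ℝ)| < δ := by
      rw [abs_sub_comm, ← Real.dist_eq]
      exact hyd
    have hnd : ((n:ℝ))^d ≤ (N:ℝ)^d := by
      apply pow_le_pow_left₀ (by positivity) (by exact_mod_cast hnN)
    calc |y - (r:ℝ)| * (n:ℝ)^d*(q:ℝ) ≤ δ*((N:ℝ)^d)*(q:ℝ) := by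
          apply mul_le_mul_of_nonneg_right _ hq'.le
          exact mul_le_mul hyr.le hnd (by positivity) hδ.le
      _ = 1/6 := by rw [hδdef]; field_simp
      _ < 1/3 := by norm_num
  have h3 : (0:ℝ) < 3*(q:ℝ) := by positivity
  have hdisc : (2/(3*(q:ℝ)) - 1/(3*(q:ℝ))) * N ≤ monDiscrepancy d y N := by
    apply disc_lower _ N _ _ (by positivity)
    · rw [div_lt_div_iff₀ h3 h3]; nlinarith
    · rw [div_le_one h3]
      have : (1:ℝ) ≤ q := by exact_mod_cast hq
      linarith
    · exact havoid
  have hle : (N:ℝ)^α ≤ (2/(3*(q:ℝ)) - 1/(3*(q:ℝ))) * N := by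
    have hsub2 : 2/(3*(q:ℝ)) - 1/(3*(q:ℝ)) = 1/(3*(q:ℝ)) := by ring
    rw [hsub2, div_mul_eq_mul_div, le_div_iff₀ h3]
    linarith
  have := hyS N hNM
  linarith

lemma nwd_meagre {s : Set ℝ} (h : IsNowhereDense s) : IsMeagre s :=
  isMeagre_iff_countable_union_isNowhereDense.mpr
    ⟨{s}, by simpa, Set.countable_singleton s, by simp⟩

/-- For `0 < α < 1` and `d ≥ 2`, the complement `[0,1) \ 𝒟_{α,d}` is meagre. -/
theorem stmt9 (d : ℕ) (hd : 2 ≤ d) (α : ℝ) (hα0 : 0 < α) (hα1 : α < 1) :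
    IsMeagre (Set.Ico (0 : ℝ) 1 \ monDiscSet d α) := by
  have hsub : Set.Ico (0:ℝ) 1 \ monDiscSet d α ⊆
      ⋃ M : ℕ, {x : ℝ | ∀ N, M ≤ N → monDiscrepancy d x N < (N:ℝ)^α} := by
    rintro x ⟨hx1, hx2⟩
    have hnf : ¬ ∃ᶠ N : ℕ in atTop, (N:ℝ)^α ≤ monDiscrepancy d x N :=
      fun h => hx2 ⟨hx1, h⟩
    rw [Filter.not_frequently] at hnf
    simp only [not_le] at hnf
    obtain ⟨M, hM⟩ := eventually_atTop.mp hnf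
    exact Set.mem_iUnion.mpr ⟨M, hM⟩
  exact (isMeagre_iUnion fun M => nwd_meagre (aux_nwd d α hα1 M)).mono hsub
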